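/- Let d ≥ 1 and let 𝖠 ⊆ M_d(ℝ) be compact and nonempty with a multicone (K_1,…,K_m) and transverse-defining vector w, and let Ω := {z ∈ ℂ^d : z ∈ ∪_{j=1}^m int(K_j^ℂ) and ⟨z,w⟩ = 1}. Then there exists a constant C > 0 such that for every A ∈ 𝒮(𝖠) and every z ∈ Ω one has C^{-1}·‖A‖ ≤ |⟨Az,w⟩| ≤ C·‖A‖, where ‖A‖ is the operator norm of A with respect to the Euclidean norm. -/

import Mathlib

open scoped BigOperators Pointwise

noncomputable section

/-- The Euclidean norm of a finitely-indexed vector (real or complex entries). -/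
def enorm {ι : Type*} [Fintype ι] {E : Type*} [Norm E] (u : ι → E) : ℝ :=
  Real.sqrt (∑ i, ‖u i‖ ^ 2)

/-- The operator norm of a real matrix induced by the Euclidean norm. -/
def opNorm {ι : Type*} [Fintype ι] (A : Matrix ι ι ℝ) : ℝ :=
  sSup ((fun u : ι → ℝ => _root_.enorm (A.mulVec u)) '' {u : ι → ℝ | _root_.enorm u = 1})

/-- A multicone for a set of matrices (Definition 1.2). -/
def IsMulticone {ι : Type*} [Fintype ι] (S : Set (Matrix ι ι ℝ)) {m : ℕ}
    (K : Fin m → Set (ι → ℝ)) (w : ι → ℝ) : Prop :=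
  (∀ j, IsClosed (K j)) ∧ (∀ j, Convex ℝ (K j)) ∧ (∀ j, (interior (K j)).Nonempty) ∧
  (∀ j, ∀ c : ℝ, 0 ≤ c → ∀ u ∈ K j, c • u ∈ K j) ∧
  (∑ i, w i ^ 2 = 1) ∧
  (∀ u ∈ ⋃ j, K j, u ≠ 0 → 0 < ∑ i, u i * w i) ∧
  (∀ A ∈ S, ∀ j, ∃ ℓ, ∀ u ∈ K j, u ≠ 0 →
    A.mulVec u ∈ interior (K ℓ) ∨ -A.mulVec u ∈ interior (K ℓ)) ∧
  (∀ j₁ j₂, j₁ ≠ j₂ → K j₁ ∩ K j₂ = {0})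

/-- The set of matrices is multipositive if it admits a multicone. -/
def IsMultipositive {ι : Type*} [Fintype ι] (S : Set (Matrix ι ι ℝ)) : Prop :=
  ∃ (m : ℕ) (_ : 0 < m) (K : Fin m → Set (ι → ℝ)) (w : ι → ℝ), IsMulticone S K w

/-- The semigroup generated by a set of matrices. -/
def semigroupOf {ι : Type*} [Fintype ι] [DecidableEq ι] (S : Set (Matrix ι ι ℝ)) :
    Set (Matrix ι ι ℝ) :=
  {B | ∃ l : List (Matrix ι ι ℝ), l ≠ [] ∧ (∀ M ∈ l, M ∈ S) ∧ B = l.prod}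

/-- The complexification of a set in ℝ^ι. -/
def complexify {ι : Type*} (K : Set (ι → ℝ)) : Set (ι → ℂ) :=
  {z | ∃ (c : ℂ) (u v : ι → ℝ), u ∈ K ∧ v ∈ K ∧
    z = fun i => c * (((u i : ℂ) + (v i : ℂ)) + Complex.I * ((u i : ℂ) - (v i : ℂ)))}

/-- The action of a real matrix on complex vectors. -/
def mulVecC {ι : Type*} [Fintype ι] (A : Matrix ι ι ℝ) (z : ι → ℂ) : ι → ℂ :=
  (A.map (fun x : ℝ => (x : ℂ))).mulVec z

/-- An ℝ-cone: closed, convex, nonempty interior, positively homogeneous, proper. -/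
def IsRCone {ι : Type*} [Fintype ι] (K : Set (ι → ℝ)) : Prop :=
  IsClosed K ∧ Convex ℝ K ∧ (interior K).Nonempty ∧
  (∀ c : ℝ, 0 < c → c • K = K) ∧ K ∩ (-K) = {0}

end

/-!
Compactness of the unit sphere gives `δ > 0` with `δ ‖u‖ ≤ ⟨u, w⟩` on every cone. By connectedness
of `K j \ {0}`, each matrix of the semigroup maps every cone into a single cone up to one global
sign, so for `x, y` in a common cone `δ (‖A x‖ + ‖A y‖) ≤ |⟨A (x + y), w⟩|`. Applied to `p ± q` this
gives `δ ‖A q‖ ≤ ‖A p‖` whenever `p ± q` lie in one cone. With `p = x₀` an interior point this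
bounds `‖A‖` by `‖A x₀‖`. With `p = A₁ t` for the last factor `A₁ ∈ S` of `A` and `q` a small
multiple of `A₁ x₀` (compactness of `S` keeps a ball of uniform radius around `A₁ t` inside a cone,
up to sign) it gives `‖A x₀‖ ≲ ‖A t‖`, hence `‖A‖ ≲ ‖A t‖` for every unit `t` in a cone.

For `z = c ((u + v) + i (u - v))`, `⟨A z, w⟩ = c (⟨A (u + v), w⟩ + i ⟨A (u - v), w⟩)`, and the
normalisation `⟨z, w⟩ = 1` forces `1 / 2 ≤ |c| (‖u‖ + ‖v‖) ≤ 1 / δ`; both bounds follow.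
-/

open Matrix Set Topology

-- The named argument selects the `enorm` above over Mathlib's `ENorm.enorm`.
local notation "‖" u "‖₂" => enorm (E := ℝ) u

namespace EuclideanNorm

variable {ι : Type*} [Fintype ι]

theorem eq_norm_toLp (u : ι → ℝ) : ‖u‖₂ = ‖WithLp.toLp 2 u‖ := by
  rw [EuclideanSpace.norm_eq]; rfl

theorem nonneg (u : ι → ℝ) : 0 ≤ ‖u‖₂ := Real.sqrt_nonneg _

theorem add_le (u v : ι → ℝ) : ‖u + v‖₂ ≤ ‖u‖₂ + ‖v‖₂ := by
  simpa only [eq_norm_toLp, WithLp.toLp_add] using norm_add_le _ _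

theorem sub_le (u v : ι → ℝ) : ‖u - v‖₂ ≤ ‖u‖₂ + ‖v‖₂ := by
  simpa only [eq_norm_toLp, WithLp.toLp_sub] using norm_sub_le _ _

theorem smul (c : ℝ) (u : ι → ℝ) : ‖c • u‖₂ = |c| * ‖u‖₂ := by
  simp only [eq_norm_toLp, WithLp.toLp_smul, norm_smul, Real.norm_eq_abs]

theorem zero : ‖(0 : ι → ℝ)‖₂ = 0 := by
  simp [eq_norm_toLp]

theorem neg (u : ι → ℝ) : ‖-u‖₂ = ‖u‖₂ := by
  simpa using smul (-1) u

theorem pos {u : ι → ℝ} (hu : u ≠ 0) : 0 < ‖u‖₂ := by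
  rw [eq_norm_toLp, norm_pos_iff]
  exact fun h => hu (congrArg WithLp.ofLp h)

theorem ne_zero_of_eq_one {u : ι → ℝ} (hu : ‖u‖₂ = 1) : u ≠ 0 := by
  rintro rfl
  exact zero_ne_one (zero.symm.trans hu)

theorem inv_smul_self {u : ι → ℝ} (hu : u ≠ 0) : ‖‖u‖₂⁻¹ • u‖₂ = 1 := by
  rw [smul, abs_inv, abs_of_pos (pos hu), inv_mul_cancel₀ (pos hu).ne']

theorem norm_le (u : ι → ℝ) : ‖u‖ ≤ ‖u‖₂ :=
  (pi_norm_le_iff_of_nonneg (nonneg u)).2 fun i => by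
    simpa only [eq_norm_toLp] using PiLp.norm_apply_le (WithLp.toLp 2 u) i

theorem continuous : Continuous fun u : ι → ℝ => ‖u‖₂ := by
  simpa only [eq_norm_toLp] using (PiLp.continuous_toLp 2 fun _ : ι => ℝ).norm

theorem isCompact_eq_one : IsCompact {u : ι → ℝ | ‖u‖₂ = 1} :=
  (isCompact_closedBall 0 1).of_isClosed_subset (isClosed_eq continuous continuous_const)
    fun u (hu : ‖u‖₂ = 1) => by simpa [hu] using norm_le u

theorem abs_dotProduct_le (u v : ι → ℝ) : |u ⬝ᵥ v| ≤ ‖u‖₂ * ‖v‖₂ := by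
  have h := abs_real_inner_le_norm (WithLp.toLp 2 v) (WithLp.toLp 2 u)
  rwa [EuclideanSpace.inner_toLp_toLp, star_trivial, ← eq_norm_toLp,
    ← eq_norm_toLp, mul_comm] at h

theorem abs_dotProduct_le_of_eq_one {w : ι → ℝ} (hw : ‖w‖₂ = 1) (u : ι → ℝ) :
    |u ⬝ᵥ w| ≤ ‖u‖₂ := by
  simpa only [hw, mul_one] using abs_dotProduct_le u w

end EuclideanNorm

section OpNorm

variable {ι : Type*} [Fintype ι]

theorem opNorm_le_of_forall {A : Matrix ι ι ℝ} {C : ℝ} (hC : 0 ≤ C)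
    (h : ∀ u : ι → ℝ, ‖u‖₂ = 1 → ‖A *ᵥ u‖₂ ≤ C) : opNorm A ≤ C :=
  Real.sSup_le (by rintro _ ⟨u, hu, rfl⟩; exact h u hu) hC

variable [DecidableEq ι]

theorem opNorm_eq_norm_toEuclideanCLM (A : Matrix ι ι ℝ) :
    opNorm A = ‖toEuclideanCLM (𝕜 := ℝ) A‖ := by
  rw [← ContinuousLinearMap.sSup_sphere_eq_norm, opNorm]
  congr 1
  ext r
  constructor
  · rintro ⟨u, hu, rfl⟩
    exact ⟨WithLp.toLp 2 u, by simpa [EuclideanNorm.eq_norm_toLp] using hu,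
      by simp [EuclideanNorm.eq_norm_toLp]⟩
  · rintro ⟨x, hx, rfl⟩
    refine ⟨WithLp.ofLp x, by simpa [EuclideanNorm.eq_norm_toLp] using hx, ?_⟩
    dsimp only
    rw [EuclideanNorm.eq_norm_toLp, ← toEuclideanCLM_toLp, WithLp.toLp_ofLp]

theorem opNorm_nonneg (A : Matrix ι ι ℝ) : 0 ≤ opNorm A := by
  rw [opNorm_eq_norm_toEuclideanCLM]; exact norm_nonneg _

theorem enorm_mulVec_le (A : Matrix ι ι ℝ) (u : ι → ℝ) : ‖A *ᵥ u‖₂ ≤ opNorm A * ‖u‖₂ := by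
  simpa only [opNorm_eq_norm_toEuclideanCLM, EuclideanNorm.eq_norm_toLp, toEuclideanCLM_toLp]
    using (toEuclideanCLM (𝕜 := ℝ) A).le_opNorm (WithLp.toLp 2 u)

end OpNorm

def MapsConesUpToSign {ι κ : Type*} [Fintype ι] (K : κ → Set (ι → ℝ)) (A : Matrix ι ι ℝ) :
    Prop :=
  ∀ j, ∃ ℓ, ∃ ε : ℝ, |ε| = 1 ∧ ∀ u ∈ K j, ε • (A *ᵥ u) ∈ K ℓ

namespace MapsConesUpToSign

variable {ι κ : Type*} [Fintype ι] {K : κ → Set (ι → ℝ)} {A B : Matrix ι ι ℝ}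

theorem one [DecidableEq ι] : MapsConesUpToSign K 1 :=
  fun j => ⟨j, 1, abs_one, fun u hu => by simpa using hu⟩

theorem mul (hA : MapsConesUpToSign K A) (hB : MapsConesUpToSign K B) :
    MapsConesUpToSign K (A * B) := by
  intro j
  obtain ⟨ℓ₁, ε₁, hε₁, h₁⟩ := hB j
  obtain ⟨ℓ₂, ε₂, hε₂, h₂⟩ := hA ℓ₁
  refine ⟨ℓ₂, ε₂ * ε₁, by rw [abs_mul, hε₁, hε₂, one_mul], fun u hu => ?_⟩
  simpa only [mulVec_smul, mulVec_mulVec, smul_smul] using h₂ _ (h₁ u hu)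

variable {w : ι → ℝ} {δ : ℝ}

theorem le_abs_dotProduct (hA : MapsConesUpToSign K A)
    (hδ : ∀ j, ∀ u ∈ K j, δ * ‖u‖₂ ≤ u ⬝ᵥ w) {j : κ} {x y : ι → ℝ} (hx : x ∈ K j)
    (hy : y ∈ K j) : δ * (‖A *ᵥ x‖₂ + ‖A *ᵥ y‖₂) ≤ |(A *ᵥ (x + y)) ⬝ᵥ w| := by
  obtain ⟨ℓ, ε, hε, h⟩ := hA j
  have hsum := add_le_add (hδ ℓ _ (h x hx)) (hδ ℓ _ (h y hy))
  rw [EuclideanNorm.smul, EuclideanNorm.smul, hε, one_mul, one_mul, ← mul_add, ← add_dotProduct,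
    ← smul_add, ← mulVec_add, smul_dotProduct, smul_eq_mul] at hsum
  calc δ * (‖A *ᵥ x‖₂ + ‖A *ᵥ y‖₂) ≤ ε * ((A *ᵥ (x + y)) ⬝ᵥ w) := hsum
    _ ≤ |ε * ((A *ᵥ (x + y)) ⬝ᵥ w)| := le_abs_self _
    _ = |(A *ᵥ (x + y)) ⬝ᵥ w| := by rw [abs_mul, hε, one_mul]

theorem le_enorm_mulVec_add (hA : MapsConesUpToSign K A) (hw : ‖w‖₂ = 1)
    (hδ : ∀ j, ∀ u ∈ K j, δ * ‖u‖₂ ≤ u ⬝ᵥ w) {j : κ} {x y : ι → ℝ} (hx : x ∈ K j)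
    (hy : y ∈ K j) : δ * (‖A *ᵥ x‖₂ + ‖A *ᵥ y‖₂) ≤ ‖A *ᵥ (x + y)‖₂ :=
  (hA.le_abs_dotProduct hδ hx hy).trans (EuclideanNorm.abs_dotProduct_le_of_eq_one hw _)

/-- `2 A q = A (p + q) - A (p - q)`, and `‖A (p + q)‖ + ‖A (p - q)‖ ≤ ‖2 A p‖ / δ`. -/
theorem mul_enorm_mulVec_le (hA : MapsConesUpToSign K A) (hw : ‖w‖₂ = 1)
    (hδ : ∀ j, ∀ u ∈ K j, δ * ‖u‖₂ ≤ u ⬝ᵥ w) {j : κ} {p q : ι → ℝ} (hpq : p + q ∈ K j)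
    (hpq' : p - q ∈ K j) : δ * ‖A *ᵥ q‖₂ ≤ ‖A *ᵥ p‖₂ := by
  have hsum := hA.le_enorm_mulVec_add hw hδ hpq hpq'
  have hdiff := EuclideanNorm.sub_le (A *ᵥ (p + q)) (A *ᵥ (p - q))
  rw [show p + q + (p - q) = (2 : ℝ) • p by module, mulVec_smul, EuclideanNorm.smul,
    abs_two] at hsum
  rw [← mulVec_sub, show p + q - (p - q) = (2 : ℝ) • q by module, mulVec_smul,
    EuclideanNorm.smul, abs_two] at hdiff
  rcases le_or_gt δ 0 with hδ₀ | hδ₀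
  · nlinarith [EuclideanNorm.nonneg (A *ᵥ q), EuclideanNorm.nonneg (A *ᵥ p)]
  · nlinarith [mul_le_mul_of_nonneg_left hdiff hδ₀.le]

theorem opNorm_le_of_ball [DecidableEq ι] (hA : MapsConesUpToSign K A) (hw : ‖w‖₂ = 1)
    (hδ : ∀ j, ∀ u ∈ K j, δ * ‖u‖₂ ≤ u ⬝ᵥ w) (hδ₀ : 0 < δ) {j : κ} {x₀ : ι → ℝ} {η : ℝ}
    (hη : 0 < η) (hball : Metric.ball x₀ η ⊆ K j) : opNorm A ≤ 2 / (δ * η) * ‖A *ᵥ x₀‖₂ := by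
  have := EuclideanNorm.nonneg (A *ᵥ x₀)
  refine opNorm_le_of_forall (by positivity) fun u hu => ?_
  have hq : ‖(η / 2) • u‖ < η := by
    refine (EuclideanNorm.norm_le _).trans_lt ?_
    rw [EuclideanNorm.smul, hu, abs_of_pos (half_pos hη)]
    linarith
  have hplus : x₀ + (η / 2) • u ∈ K j :=
    hball (by rwa [Metric.mem_ball, dist_eq_norm, add_sub_cancel_left])
  have hminus : x₀ - (η / 2) • u ∈ K j :=
    hball (by rwa [Metric.mem_ball, dist_eq_norm, sub_sub_cancel_left, norm_neg])
  have h := hA.mul_enorm_mulVec_le hw hδ hplus hminus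
  rw [mulVec_smul, EuclideanNorm.smul, abs_of_pos (half_pos hη)] at h
  rw [div_mul_eq_mul_div, le_div_iff₀ (by positivity)]
  linarith

end MapsConesUpToSign

theorem exists_eq_mul_of_mem_semigroupOf {ι : Type*} [Fintype ι] [DecidableEq ι]
    {S : Set (Matrix ι ι ℝ)} {A : Matrix ι ι ℝ} (hA : A ∈ semigroupOf S) :
    ∃ B ∈ Submonoid.closure S, ∃ A₁ ∈ S, A = B * A₁ := by
  obtain ⟨l, hl, hlS, rfl⟩ := hA
  obtain ⟨L, A₁, rfl⟩ := (List.eq_nil_or_concat l).resolve_left hl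
  simp only [List.concat_eq_append, List.mem_append, List.mem_singleton] at hlS
  exact ⟨L.prod, Submonoid.list_prod_mem _ fun M hM => Submonoid.subset_closure (hlS M (.inl hM)),
    A₁, hlS A₁ (.inr rfl), List.prod_concat⟩

section Complexification

variable {ι : Type*} [Fintype ι]

theorem abs_le_norm_ofReal_add_mul_I (x y : ℝ) : |x| ≤ ‖(x : ℂ) + y * Complex.I‖ := by
  simpa using Complex.abs_re_le_norm ((x : ℂ) + y * Complex.I)

theorem norm_ofReal_add_mul_I_le (x y : ℝ) : ‖(x : ℂ) + y * Complex.I‖ ≤ |x| + |y| := by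
  simpa using norm_add_le (x : ℂ) (y * Complex.I)

theorem sum_mulVecC_complexify_mul_eq (A : Matrix ι ι ℝ) (w : ι → ℝ) (c : ℂ) (u v : ι → ℝ) :
    ∑ i, mulVecC A
        (fun i => c * (((u i : ℂ) + (v i : ℂ)) + Complex.I * ((u i : ℂ) - (v i : ℂ)))) i
        * (w i : ℂ) =
      c * (((A *ᵥ (u + v)) ⬝ᵥ w : ℝ) + ((A *ᵥ (u - v)) ⬝ᵥ w : ℝ) * Complex.I) := by
  simp only [mulVecC, mulVec, dotProduct, Matrix.map_apply, Pi.add_apply, Pi.sub_apply]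
  push_cast
  simp only [Finset.mul_sum, Finset.sum_mul, ← Finset.sum_add_distrib]
  refine Finset.sum_congr rfl fun i _ => Finset.sum_congr rfl fun j _ => ?_
  ring

theorem sum_complexify_mul_eq (w : ι → ℝ) (c : ℂ) (u v : ι → ℝ) :
    ∑ i, c * (((u i : ℂ) + (v i : ℂ)) + Complex.I * ((u i : ℂ) - (v i : ℂ))) * (w i : ℂ) =
      c * ((((u + v) ⬝ᵥ w : ℝ) : ℂ) + ((u - v) ⬝ᵥ w : ℝ) * Complex.I) := by
  simp only [dotProduct, Pi.add_apply, Pi.sub_apply]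
  push_cast
  simp only [Finset.mul_sum, Finset.sum_mul, ← Finset.sum_add_distrib]
  refine Finset.sum_congr rfl fun i _ => ?_
  ring

end Complexification

namespace IsMulticone

variable {ι : Type*} [Fintype ι] {S : Set (Matrix ι ι ℝ)} {m : ℕ} {K : Fin m → Set (ι → ℝ)}
  {w : ι → ℝ} (hK : IsMulticone S K w)
include hK

theorem enorm_eq_one : ‖w‖₂ = 1 := by
  simp only [_root_.enorm, Real.norm_eq_abs, sq_abs, hK.2.2.2.2.1, Real.sqrt_one]

theorem isClosed (j : Fin m) : IsClosed (K j) := hK.1 j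

theorem convex (j : Fin m) : Convex ℝ (K j) := hK.2.1 j

theorem interior_nonempty (j : Fin m) : (interior (K j)).Nonempty := hK.2.2.1 j

theorem exists_mulVec_mem_interior {A : Matrix ι ι ℝ} (hA : A ∈ S) (j : Fin m) :
    ∃ ℓ, ∀ u ∈ K j, u ≠ 0 → A *ᵥ u ∈ interior (K ℓ) ∨ -(A *ᵥ u) ∈ interior (K ℓ) :=
  hK.2.2.2.2.2.2.1 A hA j

theorem smul_mem {j : Fin m} {c : ℝ} (hc : 0 ≤ c) {u : ι → ℝ} (hu : u ∈ K j) : c • u ∈ K j :=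
  hK.2.2.2.1 j c hc u hu

theorem zero_mem (j : Fin m) : (0 : ι → ℝ) ∈ K j := by
  obtain ⟨u, hu⟩ := hK.interior_nonempty j
  simpa using hK.smul_mem le_rfl (interior_subset hu)

theorem dotProduct_pos {j : Fin m} {u : ι → ℝ} (hu : u ∈ K j) (h0 : u ≠ 0) : 0 < u ⬝ᵥ w :=
  hK.2.2.2.2.2.1 u (mem_iUnion.2 ⟨j, hu⟩) h0

theorem dotProduct_nonneg {j : Fin m} {u : ι → ℝ} (hu : u ∈ K j) : 0 ≤ u ⬝ᵥ w := by
  rcases eq_or_ne u 0 with rfl | h0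
  · simp
  · exact (hK.dotProduct_pos hu h0).le

theorem zero_notMem_interior (j : Fin m) : (0 : ι → ℝ) ∉ interior (K j) := by
  intro h
  have hww : w ⬝ᵥ w = 1 := by simpa [dotProduct, sq] using hK.2.2.2.2.1
  have hlim : Filter.Tendsto (fun t : ℝ => -t • w) (𝓝[>] 0) (𝓝 0) := by
    have hc : Continuous fun t : ℝ => -t • w := by fun_prop
    simpa using (hc.tendsto 0).mono_left nhdsWithin_le_nhds
  obtain ⟨t, htK, ht⟩ :=
    ((hlim.eventually (mem_interior_iff_mem_nhds.1 h)).and eventually_mem_nhdsWithin).exists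
  have := hK.dotProduct_nonneg (htK : -t • w ∈ K j)
  rw [smul_dotProduct, hww, smul_eq_mul, mul_one] at this
  linarith [mem_Ioi.1 ht]

theorem ne_zero_of_mem_interior {j : Fin m} {u : ι → ℝ} (hu : u ∈ interior (K j)) : u ≠ 0 :=
  fun h => hK.zero_notMem_interior j (h ▸ hu)

theorem isCompact_enorm_eq_one_inter : IsCompact ({u : ι → ℝ | ‖u‖₂ = 1} ∩ ⋃ j, K j) :=
  EuclideanNorm.isCompact_eq_one.inter_right (isClosed_iUnion_of_finite hK.isClosed)

theorem exists_aperture : ∃ δ > 0, ∀ j, ∀ u ∈ K j, δ * ‖u‖₂ ≤ u ⬝ᵥ w := by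
  obtain ⟨δ, hδ, hle⟩ := hK.isCompact_enorm_eq_one_inter.exists_forall_le' (f := (· ⬝ᵥ w))
    (continuous_id.dotProduct continuous_const).continuousOn (a := 0) fun u ⟨hu1, hu⟩ => by
      obtain ⟨j, hj⟩ := mem_iUnion.1 hu
      exact hK.dotProduct_pos hj (EuclideanNorm.ne_zero_of_eq_one hu1)
  refine ⟨δ, hδ, fun j u hu => ?_⟩
  rcases eq_or_ne u 0 with rfl | h0
  · simp [EuclideanNorm.zero]
  have := hle (‖u‖₂⁻¹ • u) ⟨EuclideanNorm.inv_smul_self h0,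
    mem_iUnion.2 ⟨j, hK.smul_mem (inv_nonneg.2 (EuclideanNorm.nonneg u)) hu⟩⟩
  rw [smul_dotProduct, smul_eq_mul, le_inv_mul_iff₀ (EuclideanNorm.pos h0)] at this
  linarith

theorem mapsConesUpToSign {A : Matrix ι ι ℝ} (hA : A ∈ S) : MapsConesUpToSign K A := by
  intro j
  obtain ⟨ℓ, hℓ⟩ := hK.exists_mulVec_mem_interior hA j
  set s := K j ∩ {u | 0 < u ⬝ᵥ w}
  set U := (A *ᵥ ·) ⁻¹' interior (K ℓ)
  set V := (fun u => -(A *ᵥ u)) ⁻¹' interior (K ℓ)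
  have hcont : Continuous (A *ᵥ · : (ι → ℝ) → ι → ℝ) :=
    continuous_const.matrix_mulVec continuous_id
  have hU : IsOpen U := isOpen_interior.preimage hcont
  have hV : IsOpen V := isOpen_interior.preimage hcont.neg
  have hUV : Disjoint U V := by
    refine Set.disjoint_left.2 fun u hu hv => ?_
    have h1 := hK.dotProduct_pos (interior_subset hu) (hK.ne_zero_of_mem_interior hu)
    have h2 := hK.dotProduct_pos (interior_subset hv) (hK.ne_zero_of_mem_interior hv)
    rw [neg_dotProduct] at h2
    linarith
  have hcover : s ⊆ U ∪ V := fun u hu => hℓ u hu.1 (by rintro rfl; simpa using hu.2)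
  have hs : IsPreconnected s :=
    ((hK.convex j).inter (convex_halfSpace_gt
      ⟨fun x y => add_dotProduct x y w, fun c x => smul_dotProduct c x w⟩ 0)).isPreconnected
  suffices ∃ ε : ℝ, |ε| = 1 ∧ ∀ u ∈ s, ε • (A *ᵥ u) ∈ interior (K ℓ) by
    obtain ⟨ε, hε, h⟩ := this
    refine ⟨ℓ, ε, hε, fun u hu => ?_⟩
    rcases eq_or_ne u 0 with rfl | h0
    · simpa using hK.zero_mem ℓ
    · exact interior_subset (h u ⟨hu, hK.dotProduct_pos hu h0⟩)
  by_cases hsU : (s ∩ U).Nonempty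
  · refine ⟨1, abs_one, fun u hu => ?_⟩
    rw [one_smul]
    exact hs.subset_left_of_subset_union hU hV hUV hcover hsU hu
  · refine ⟨-1, by simp, fun u hu => ?_⟩
    rw [neg_one_smul]
    exact (hcover hu).resolve_left fun h => hsU ⟨u, hu, h⟩

theorem mapsConesUpToSign_of_mem_closure [DecidableEq ι] {A : Matrix ι ι ℝ}
    (hA : A ∈ Submonoid.closure S) : MapsConesUpToSign K A :=
  Submonoid.closure_induction (fun _ h => hK.mapsConesUpToSign h) .one
    (fun _ _ _ _ h₁ h₂ => h₁.mul h₂) hA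

theorem mapsConesUpToSign_of_mem_semigroupOf [DecidableEq ι] {A : Matrix ι ι ℝ}
    (hA : A ∈ semigroupOf S) : MapsConesUpToSign K A := by
  obtain ⟨B, hB, A₁, hA₁, rfl⟩ := exists_eq_mul_of_mem_semigroupOf hA
  exact (hK.mapsConesUpToSign_of_mem_closure hB).mul (hK.mapsConesUpToSign hA₁)

theorem exists_ball_subset (hS : IsCompact S) :
    ∃ r > 0, ∀ A ∈ S, ∀ j, ∀ t ∈ K j, ‖t‖₂ = 1 →
      ∃ ℓ, ∃ ε : ℝ, |ε| = 1 ∧ ∀ y ∈ Metric.ball (A *ᵥ t) r, ε • y ∈ K ℓ := by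
  set T := (fun p : Matrix ι ι ℝ × (ι → ℝ) => p.1 *ᵥ p.2) ''
    (S ×ˢ ({u : ι → ℝ | ‖u‖₂ = 1} ∩ ⋃ j, K j))
  have hT : IsCompact T :=
    (hS.prod hK.isCompact_enorm_eq_one_inter).image (continuous_fst.matrix_mulVec continuous_snd)
  let c : Fin m × {ε : ℝ // |ε| = 1} → Set (ι → ℝ) := fun i => (i.2.1 • ·) ⁻¹' interior (K i.1)
  have hc : ∀ i, IsOpen (c i) := fun i => isOpen_interior.preimage (continuous_const_smul _)
  have hTc : T ⊆ ⋃ i, c i := by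
    rintro _ ⟨⟨A, t⟩, ⟨hA, ht1, ht⟩, rfl⟩
    obtain ⟨j, hj⟩ := mem_iUnion.1 ht
    obtain ⟨ℓ, hℓ⟩ := hK.exists_mulVec_mem_interior hA j
    rcases hℓ t hj (EuclideanNorm.ne_zero_of_eq_one ht1) with h | h
    · exact mem_iUnion.2 ⟨(ℓ, ⟨1, abs_one⟩), by simpa [c] using h⟩
    · exact mem_iUnion.2 ⟨(ℓ, ⟨-1, by simp⟩), by simpa [c] using h⟩
  obtain ⟨r, hr, hball⟩ := lebesgue_number_lemma_of_metric hT hc hTc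
  refine ⟨r, hr, fun A hA j t ht ht1 => ?_⟩
  obtain ⟨⟨ℓ, ε, hε⟩, hsub⟩ := hball _ ⟨(A, t), ⟨hA, ht1, mem_iUnion.2 ⟨j, ht⟩⟩, rfl⟩
  exact ⟨ℓ, ε, hε, fun y hy => interior_subset (hsub hy)⟩

theorem exists_opNorm_le [DecidableEq ι] (hm : 0 < m) (hS : IsCompact S) :
    ∃ C > 0, ∀ A ∈ semigroupOf S, ∀ j, ∀ t ∈ K j, ‖t‖₂ = 1 → opNorm A ≤ C * ‖A *ᵥ t‖₂ := by
  obtain ⟨δ, hδ, hδK⟩ := hK.exists_aperture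
  obtain ⟨x₀, hx₀⟩ := hK.interior_nonempty ⟨0, hm⟩
  obtain ⟨η, hη, hballη⟩ := Metric.isOpen_iff.1 isOpen_interior x₀ hx₀
  obtain ⟨M, hM₀, hM⟩ := (hS.bddAbove_image (f := fun A : Matrix ι ι ℝ => ‖A *ᵥ x₀‖₂)
    (EuclideanNorm.continuous.comp
      (continuous_id.matrix_mulVec continuous_const)).continuousOn).exists_ge 0
  obtain ⟨r, hr, hmargin⟩ := hK.exists_ball_subset hS
  set τ := r / (M + 1)
  have hτ : 0 < τ := by positivity
  refine ⟨2 / (δ * η) / (δ * τ), by positivity, fun A hA j t ht ht1 => ?_⟩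
  obtain ⟨B, hB, A₁, hA₁, rfl⟩ := exists_eq_mul_of_mem_semigroupOf hA
  have hB' := hK.mapsConesUpToSign_of_mem_closure hB
  have hnorm := (hB'.mul (hK.mapsConesUpToSign hA₁)).opNorm_le_of_ball hK.enorm_eq_one hδK hδ hη
    fun y hy => interior_subset (hballη hy)
  obtain ⟨ℓ, ε, hε, hball⟩ := hmargin A₁ hA₁ j t ht ht1
  have hsmall : ‖τ • (A₁ *ᵥ x₀)‖ < r := by
    refine (EuclideanNorm.norm_le _).trans_lt ?_
    rw [EuclideanNorm.smul, abs_of_pos hτ]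
    calc τ * ‖A₁ *ᵥ x₀‖₂ ≤ τ * M := mul_le_mul_of_nonneg_left (hM _ ⟨A₁, hA₁, rfl⟩) hτ.le
      _ < r := by rw [div_mul_eq_mul_div, div_lt_iff₀ (by positivity)]; linarith
  have hplus := hball (A₁ *ᵥ t + τ • (A₁ *ᵥ x₀))
    (by rwa [Metric.mem_ball, dist_eq_norm, add_sub_cancel_left])
  have hminus := hball (A₁ *ᵥ t - τ • (A₁ *ᵥ x₀))
    (by rwa [Metric.mem_ball, dist_eq_norm, sub_sub_cancel_left, norm_neg])
  rw [smul_add] at hplus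
  rw [smul_sub] at hminus
  have key := hB'.mul_enorm_mulVec_le hK.enorm_eq_one hδK hplus hminus
  simp only [mulVec_smul, EuclideanNorm.smul, hε, one_mul, mulVec_mulVec, abs_of_pos hτ] at key
  calc opNorm (B * A₁) ≤ 2 / (δ * η) * ‖(B * A₁) *ᵥ x₀‖₂ := hnorm
    _ = 2 / (δ * η) / (δ * τ) * (δ * (τ * ‖(B * A₁) *ᵥ x₀‖₂)) := by field_simp
    _ ≤ 2 / (δ * η) / (δ * τ) * ‖(B * A₁) *ᵥ t‖₂ := by gcongr

theorem exists_opNorm_mul_enorm_le [DecidableEq ι] (hm : 0 < m) (hS : IsCompact S) :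
    ∃ C > 0, ∀ A ∈ semigroupOf S, ∀ j, ∀ t ∈ K j, opNorm A * ‖t‖₂ ≤ C * ‖A *ᵥ t‖₂ := by
  obtain ⟨C, hC, h⟩ := hK.exists_opNorm_le hm hS
  refine ⟨C, hC, fun A hA j t ht => ?_⟩
  rcases eq_or_ne t 0 with rfl | h0
  · simp [EuclideanNorm.zero]
  have ht' := h A hA j _ (hK.smul_mem (inv_nonneg.2 (EuclideanNorm.nonneg t)) ht)
    (EuclideanNorm.inv_smul_self h0)
  rw [mulVec_smul, EuclideanNorm.smul, abs_inv, abs_of_pos (EuclideanNorm.pos h0)] at ht'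
  have := EuclideanNorm.pos h0
  calc opNorm A * ‖t‖₂ ≤ C * (‖t‖₂⁻¹ * ‖A *ᵥ t‖₂) * ‖t‖₂ := by gcongr
    _ = C * ‖A *ᵥ t‖₂ := by field_simp

theorem norm_sum_mulVecC_le [DecidableEq ι] {δ : ℝ} (hδ : 0 < δ)
    (hδK : ∀ j, ∀ u ∈ K j, δ * ‖u‖₂ ≤ u ⬝ᵥ w) {j : Fin m} {z : ι → ℂ}
    (hz : z ∈ complexify (K j)) (hz1 : ∑ i, z i * (w i : ℂ) = 1) (A : Matrix ι ι ℝ) :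
    ‖∑ i, mulVecC A z i * (w i : ℂ)‖ ≤ 2 / δ * opNorm A := by
  obtain ⟨c, u, v, hu, hv, rfl⟩ := hz
  have hw := hK.enorm_eq_one
  have hc : ‖c‖ * (δ * (‖u‖₂ + ‖v‖₂)) ≤ 1 := calc
    ‖c‖ * (δ * (‖u‖₂ + ‖v‖₂)) ≤ ‖c‖ * |(u + v) ⬝ᵥ w| := by
      gcongr
      rw [mul_add, add_dotProduct]
      exact (add_le_add (hδK j u hu) (hδK j v hv)).trans (le_abs_self _)
    _ ≤ ‖c‖ * ‖(((u + v) ⬝ᵥ w : ℝ) : ℂ) + ((u - v) ⬝ᵥ w : ℝ) * Complex.I‖ := by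
      gcongr; exact abs_le_norm_ofReal_add_mul_I _ _
    _ = 1 := by rw [← norm_mul, ← sum_complexify_mul_eq, hz1, norm_one]
  have hAw : ∀ x y : ι → ℝ, |(A *ᵥ (x + y)) ⬝ᵥ w| ≤ opNorm A * (‖x‖₂ + ‖y‖₂) := fun x y =>
    (EuclideanNorm.abs_dotProduct_le_of_eq_one hw _).trans <| (enorm_mulVec_le A _).trans <|
      mul_le_mul_of_nonneg_left (EuclideanNorm.add_le x y) (opNorm_nonneg A)
  have hP := hAw u v
  have hQ := hAw u (-v)
  rw [← sub_eq_add_neg, EuclideanNorm.neg] at hQ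
  rw [sum_mulVecC_complexify_mul_eq, norm_mul]
  calc ‖c‖ * ‖(((A *ᵥ (u + v)) ⬝ᵥ w : ℝ) : ℂ) + ((A *ᵥ (u - v)) ⬝ᵥ w : ℝ) * Complex.I‖
      ≤ ‖c‖ * (2 * (opNorm A * (‖u‖₂ + ‖v‖₂))) := by
        gcongr
        exact (norm_ofReal_add_mul_I_le _ _).trans (by linarith)
    _ = 2 / δ * opNorm A * (‖c‖ * (δ * (‖u‖₂ + ‖v‖₂))) := by field_simp
    _ ≤ 2 / δ * opNorm A := by
        have := opNorm_nonneg A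
        exact mul_le_of_le_one_right (by positivity) hc

theorem opNorm_le_norm_sum_mulVecC [DecidableEq ι] {δ C : ℝ} (hδ : 0 < δ) (hC : 0 ≤ C)
    (hδK : ∀ j, ∀ u ∈ K j, δ * ‖u‖₂ ≤ u ⬝ᵥ w) {A : Matrix ι ι ℝ} (hA : MapsConesUpToSign K A)
    {j : Fin m} (hlow : ∀ t ∈ K j, opNorm A * ‖t‖₂ ≤ C * ‖A *ᵥ t‖₂) {z : ι → ℂ}
    (hz : z ∈ complexify (K j)) (hz1 : ∑ i, z i * (w i : ℂ) = 1) :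
    opNorm A ≤ 2 * C / δ * ‖∑ i, mulVecC A z i * (w i : ℂ)‖ := by
  obtain ⟨c, u, v, hu, hv, rfl⟩ := hz
  have hw := hK.enorm_eq_one
  have hab : ∀ x y : ι → ℝ, |(x + y) ⬝ᵥ w| ≤ ‖x‖₂ + ‖y‖₂ := fun x y =>
    (EuclideanNorm.abs_dotProduct_le_of_eq_one hw _).trans (EuclideanNorm.add_le x y)
  have ha := hab u v
  have hb := hab u (-v)
  rw [← sub_eq_add_neg, EuclideanNorm.neg] at hb
  have hc : 1 ≤ 2 * (‖c‖ * (‖u‖₂ + ‖v‖₂)) := calc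
    1 = ‖c‖ * ‖(((u + v) ⬝ᵥ w : ℝ) : ℂ) + ((u - v) ⬝ᵥ w : ℝ) * Complex.I‖ := by
      rw [← norm_mul, ← sum_complexify_mul_eq, hz1, norm_one]
    _ ≤ ‖c‖ * (2 * (‖u‖₂ + ‖v‖₂)) := by
      gcongr
      exact (norm_ofReal_add_mul_I_le _ _).trans (by linarith)
    _ = 2 * (‖c‖ * (‖u‖₂ + ‖v‖₂)) := by ring
  have hP := hA.le_abs_dotProduct hδK hu hv
  rw [sum_mulVecC_complexify_mul_eq, norm_mul]
  calc opNorm A ≤ opNorm A * (2 * (‖c‖ * (‖u‖₂ + ‖v‖₂))) :=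
        le_mul_of_one_le_right (opNorm_nonneg A) hc
    _ = 2 * ‖c‖ * (opNorm A * ‖u‖₂ + opNorm A * ‖v‖₂) := by ring
    _ ≤ 2 * ‖c‖ * (C * ‖A *ᵥ u‖₂ + C * ‖A *ᵥ v‖₂) :=
        mul_le_mul_of_nonneg_left (add_le_add (hlow u hu) (hlow v hv)) (by positivity)
    _ = 2 * C / δ * ‖c‖ * (δ * (‖A *ᵥ u‖₂ + ‖A *ᵥ v‖₂)) := by field_simp
    _ ≤ 2 * C / δ * ‖c‖ * |(A *ᵥ (u + v)) ⬝ᵥ w| := by gcongr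
    _ ≤ 2 * C / δ * (‖c‖ *
          ‖(((A *ᵥ (u + v)) ⬝ᵥ w : ℝ) : ℂ) + ((A *ᵥ (u - v)) ⬝ᵥ w : ℝ) * Complex.I‖) := by
        rw [mul_assoc]
        gcongr
        exact abs_le_norm_ofReal_add_mul_I _ _

end IsMulticone

theorem stmt9_general {d m : ℕ} (hm : 0 < m)
    (S : Set (Matrix (Fin d) (Fin d) ℝ)) (hScpt : IsCompact S)
    (K : Fin m → Set (Fin d → ℝ)) (w : Fin d → ℝ) (hK : IsMulticone S K w)
    (Ω : Set (Fin d → ℂ))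
    (hΩ : Ω = {z : Fin d → ℂ | (∃ j, z ∈ interior (complexify (K j))) ∧
      ∑ i, z i * (w i : ℂ) = 1}) :
    ∃ C : ℝ, 0 < C ∧ ∀ A ∈ semigroupOf S, ∀ z ∈ Ω,
      C⁻¹ * opNorm A ≤ ‖∑ i, mulVecC A z i * (w i : ℂ)‖ ∧
      ‖∑ i, mulVecC A z i * (w i : ℂ)‖ ≤ C * opNorm A := by
  obtain ⟨δ, hδ, hδK⟩ := hK.exists_aperture
  obtain ⟨C, hC, hlow⟩ := hK.exists_opNorm_mul_enorm_le hm hScpt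
  refine ⟨max (2 / δ) (2 * C / δ), by positivity, fun A hA z hz => ?_⟩
  rw [hΩ] at hz
  obtain ⟨⟨j, hzj⟩, hz1⟩ := hz
  have hzK := interior_subset hzj
  have hnorm := opNorm_nonneg A
  constructor
  · rw [inv_mul_le_iff₀ (by positivity)]
    exact (hK.opNorm_le_norm_sum_mulVecC hδ hC.le hδK (hK.mapsConesUpToSign_of_mem_semigroupOf hA)
      (hlow A hA j) hzK hz1).trans (by gcongr; exact le_max_right _ _)
  · exact (hK.norm_sum_mulVecC_le hδ hδK hzK hz1 A).trans (by gcongr; exact le_max_left _ _)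

/-- Theorem 3.1(vii): two-sided comparison of |⟨Az,w⟩| with the operator norm of A
uniformly over z ∈ Ω and A in the generated semigroup. -/
theorem stmt9 {d m : ℕ} (hd : 1 ≤ d) (hm : 0 < m)
    (S : Set (Matrix (Fin d) (Fin d) ℝ)) (hSne : S.Nonempty) (hScpt : IsCompact S)
    (K : Fin m → Set (Fin d → ℝ)) (w : Fin d → ℝ) (hK : IsMulticone S K w)
    (Ω : Set (Fin d → ℂ))
    (hΩ : Ω = {z : Fin d → ℂ | (∃ j, z ∈ interior (complexify (K j))) ∧
      ∑ i, z i * (w i : ℂ) = 1}) :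
    ∃ C : ℝ, 0 < C ∧ ∀ A ∈ semigroupOf S, ∀ z ∈ Ω,
      C⁻¹ * opNorm A ≤ ‖∑ i, mulVecC A z i * (w i : ℂ)‖ ∧
      ‖∑ i, mulVecC A z i * (w i : ℂ)‖ ≤ C * opNorm A :=
  stmt9_general hm S hScpt K w hK Ω hΩ
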